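/- The function φ : X(τ) → X defined by choosing φ(x) ∈ ⋂_{n<ω} x(n) is Baire-measurable: for every open U ⊆ X, the preimage φ⁻¹[U] has the Baire property in X(τ), i.e., equals an open set modulo a meager set. -/

import Mathlib

open Set Topology

/-- The set of nonempty open subsets of `X` (denoted `τ⁺` in the paper). -/
abbrev PosOpen (X : Type) [TopologicalSpace X] : Type :=
  {U : Set X // IsOpen U ∧ U.Nonempty}

/-- `τ⁺` carries the discrete topology. -/
instance (priority := high) PosOpen.topology (X : Type) [TopologicalSpace X] :
    TopologicalSpace (PosOpen X) := ⊥

/-- `X(τ) = {x ∈ (τ⁺)^ω : ⋂ₙ x(n) ≠ ∅}`, a subspace of the product `(τ⁺)^ω`. -/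
abbrev SeqSpace (X : Type) [TopologicalSpace X] : Type :=
  {x : ℕ → PosOpen X // (⋂ n, ((x n).1 : Set X)).Nonempty}

/-!
Take `V` to be the set of sequences with some term inside `U`: it is open and contained in
`φ⁻¹' U`. The sequences having a finite prefix whose intersection misses `U` form an open set `E`
disjoint from `φ⁻¹' U`. A basic open set of `X(τ)` fixes a prefix `x 0, …, x (n-1)`; either the
intersection of the prefix misses `U`, and then `x ∈ E`, or it meets `U` in a nonempty open `W`,
and continuing the prefix by `W` forever gives a point of `V`. So `V ∪ E` is open dense, and
`φ⁻¹' U ∆ V` lies in its closed nowhere dense complement.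
-/

open PiNat

theorem isMeagre_symmDiff_of_dense_union {Y : Type*} [TopologicalSpace Y] {A V E : Set Y}
    (hV : IsOpen V) (hE : IsOpen E) (hVA : V ⊆ A) (hEA : Disjoint E A) (hd : Dense (V ∪ E)) :
    IsMeagre (symmDiff A V) := by
  have hnd : IsNowhereDense (V ∪ E)ᶜ :=
    (isClosed_isNowhereDense_iff_compl.mpr ⟨by rw [compl_compl]; exact hV.union hE,
      by rwa [compl_compl]⟩).2
  refine hnd.isMeagre.mono ?_
  rw [symmDiff_of_ge hVA]
  rintro x ⟨hxA, hxV⟩ (hx | hx)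
  exacts [hxV hx, hEA.notMem_of_mem_left hx hxA]

instance (X : Type) [TopologicalSpace X] : DiscreteTopology (PosOpen X) := ⟨rfl⟩

namespace SeqSpace

variable {X : Type} [TopologicalSpace X]

def termSubset (U : Set X) : Set (SeqSpace X) :=
  {x | ∃ n, ((x.1 n).1 : Set X) ⊆ U}

def prefixDisjoint (U : Set X) : Set (SeqSpace X) :=
  {x | ∃ n, Disjoint (⋂ i < n, ((x.1 i).1 : Set X)) U}

theorem isOpen_termSubset (U : Set X) : IsOpen (termSubset U) := by
  have h : termSubset U = ⋃ n, (fun x : SeqSpace X => x.1 n) ⁻¹' {W | W.1 ⊆ U} := by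
    ext x; simp [termSubset]
  rw [h]
  exact isOpen_iUnion fun n =>
    (isOpen_discrete _).preimage ((continuous_apply n).comp continuous_subtype_val)

theorem isOpen_prefixDisjoint (U : Set X) : IsOpen (prefixDisjoint U) := by
  refine isOpen_iff_forall_mem_open.mpr fun x ⟨n, hn⟩ => ⟨Subtype.val ⁻¹' cylinder x.1 n,
    fun z hz => ⟨n, ?_⟩, (isOpen_cylinder _ x.1 n).preimage continuous_subtype_val,
    self_mem_cylinder x.1 n⟩
  have hzx : ⋂ i < n, ((z.1 i).1 : Set X) = ⋂ i < n, ((x.1 i).1 : Set X) :=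
    iInter₂_congr fun i hi => by rw [mem_cylinder_iff.mp hz i hi]
  rwa [hzx]

theorem termSubset_subset_preimage {φ : SeqSpace X → X}
    (hφ : ∀ x : SeqSpace X, φ x ∈ ⋂ n, ((x.1 n).1 : Set X)) (U : Set X) :
    termSubset U ⊆ φ ⁻¹' U :=
  fun x ⟨n, hn⟩ => hn (mem_iInter.mp (hφ x) n)

theorem disjoint_prefixDisjoint_preimage {φ : SeqSpace X → X}
    (hφ : ∀ x : SeqSpace X, φ x ∈ ⋂ n, ((x.1 n).1 : Set X)) (U : Set X) :
    Disjoint (prefixDisjoint U) (φ ⁻¹' U) := by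
  refine Set.disjoint_left.mpr fun x ⟨n, hn⟩ hxU => hn.notMem_of_mem_left ?_ hxU
  exact mem_iInter₂.mpr fun i _ => mem_iInter.mp (hφ x) i

theorem exists_mem_cylinder_apply_eq (x : SeqSpace X) (n : ℕ) (W : PosOpen X)
    (hW : (W.1 : Set X) ⊆ ⋂ i < n, ((x.1 i).1 : Set X)) :
    ∃ z : SeqSpace X, z.1 ∈ cylinder x.1 n ∧ z.1 n = W := by
  let y : ℕ → PosOpen X := fun i => if i < n then x.1 i else W
  have hWy : ∀ i, (W.1 : Set X) ⊆ (y i).1 := fun i => by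
    by_cases hi : i < n
    · simpa [y, hi] using (hW.trans (biInter_subset_of_mem hi))
    · simp [y, hi]
  exact ⟨⟨y, W.2.2.mono (subset_iInter hWy)⟩, fun i hi => if_pos hi, if_neg (lt_irrefl n)⟩

theorem dense_termSubset_union_prefixDisjoint {U : Set X} (hU : IsOpen U) :
    Dense (termSubset U ∪ prefixDisjoint U) := by
  refine ((isTopologicalBasis_cylinders _).isInducing IsInducing.subtypeVal).dense_iff.mpr ?_
  rintro _ ⟨_, ⟨y, n, rfl⟩, rfl⟩ ⟨x, hx⟩
  rw [mem_preimage, mem_cylinder_iff_eq] at hx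
  rw [← hx]
  by_cases hdisj : Disjoint (⋂ i < n, ((x.1 i).1 : Set X)) U
  · exact ⟨x, self_mem_cylinder x.1 n, Or.inr ⟨n, hdisj⟩⟩
  have hWopen : IsOpen ((⋂ i < n, ((x.1 i).1 : Set X)) ∩ U) :=
    ((finite_lt_nat n).isOpen_biInter fun i _ => (x.1 i).2.1).inter hU
  obtain ⟨z, hz, hzn⟩ := exists_mem_cylinder_apply_eq x n
    ⟨_, hWopen, not_disjoint_iff_nonempty_inter.mp hdisj⟩ inter_subset_left
  exact ⟨z, hz, Or.inl ⟨n, by rw [hzn]; exact inter_subset_right⟩⟩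

end SeqSpace

theorem stmt3 (X : Type) [TopologicalSpace X]
    (φ : SeqSpace X → X) (hφ : ∀ x : SeqSpace X, φ x ∈ ⋂ n, ((x.1 n).1 : Set X))
    (U : Set X) (hU : IsOpen U) :
    ∃ V : Set (SeqSpace X), IsOpen V ∧ IsMeagre (symmDiff (φ ⁻¹' U) V) :=
  ⟨SeqSpace.termSubset U, SeqSpace.isOpen_termSubset U,
    isMeagre_symmDiff_of_dense_union (SeqSpace.isOpen_termSubset U)
      (SeqSpace.isOpen_prefixDisjoint U) (SeqSpace.termSubset_subset_preimage hφ U)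
      (SeqSpace.disjoint_prefixDisjoint_preimage hφ U)
      (SeqSpace.dense_termSubset_union_prefixDisjoint hU)⟩
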